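/- Let B_n(p) = 2π ω_N P(B_N = 0). For any random variable Z with E|Z| < ∞ that is a function of (ε_1, …, ε_N), one has E(Z | B_N = 0) = (1/B_n(p)) ∫_{−πω_N}^{πω_N} E[Z e^{itB_N/ω_N}] dt; moreover 1 ≤ √(2π)/B_n(p) ≤ 1 + ω_N^{−2}. -/

import Mathlib

/-- The probability weight of a configuration of N independent Bernoulli(p)
variables: coordinate j equals 1 (true) with probability p. -/
noncomputable def wt (N : ℕ) (p : ℝ) (ε : Fin N → Bool) : ℝ :=
  ∏ j, if ε j then p else 1 - p

/-- Expectation with respect to N i.i.d. Bernoulli(p) variables. -/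
noncomputable def bexp (N : ℕ) (p : ℝ) (Z : (Fin N → Bool) → ℝ) : ℝ :=
  ∑ ε : Fin N → Bool, wt N p ε * Z ε

open scoped Classical in
/-- Probability of an event under N i.i.d. Bernoulli(p) variables. -/
noncomputable def bprob (N : ℕ) (p : ℝ) (E : (Fin N → Bool) → Prop) : ℝ :=
  ∑ ε : Fin N → Bool, if E ε then wt N p ε else 0

/-- The centered Bernoulli sum B_N = ∑_j (ε_j − p). -/
noncomputable def BN (N : ℕ) (p : ℝ) (ε : Fin N → Bool) : ℝ :=
  ∑ j : Fin N, ((if ε j then (1 : ℝ) else 0) - p)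

open scoped Classical in
/-- The conditional expectation E(Z ∣ B_N = 0). -/
noncomputable def condExpB (N : ℕ) (p : ℝ) (Z : (Fin N → Bool) → ℝ) : ℝ :=
  bexp N p (fun ε => if BN N p ε = 0 then Z ε else 0) /
    bprob N p (fun ε => BN N p ε = 0)

/-! Since `B_N` is integer valued and `∫_{-πω}^{πω} e^{itk/ω} dt = 2πω·[k = 0]` for
integers `k`, the integral picks out the event `{B_N = 0}`, whose probability is `C(N,n) pⁿ q^(N-n)`.
Writing `k! = s_k √(2k) (k/e)^k` with Stirling's sequence `s`, and `m = N - n`,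
`√(2π) ω_N P(B_N = 0) = √π s_N / (s_n s_m)`. As `s` decreases to `√π`, this is at most `1`;
Robbins' bound `s_k ≤ √π e^{1/(12k)}` gives `s_n s_m ≤ π (1 + 1/n + 1/m) = π (1 + ω_N⁻²)`. -/

open Real Finset

section StirlingBounds

open Filter Topology Stirling

theorem stirlingSeq_pos {n : ℕ} (hn : n ≠ 0) : 0 < stirlingSeq n :=
  (sqrt_pos.2 pi_pos).trans_le (sqrt_pi_le_stirlingSeq hn)

theorem stirlingSeq_le_sqrt_pi_mul_exp {k : ℕ} (hk : k ≠ 0) :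
    stirlingSeq k ≤ √π * exp (1 / (12 * k)) := by
  -- Robbins' stepwise bound makes `log s_k - 1/(12k)` increase, and its limit is `log √π`.
  set f : ℕ → ℝ := fun j => log (stirlingSeq (j + 1)) - 1 / (12 * (j + 1 : ℕ)) with hf
  have hmono : Monotone f := by
    refine monotone_nat_of_le_succ fun j => ?_
    have hstep := log_stirlingSeq_sdiff_le (j + 1)
    have hsplit : (1 : ℝ) / (12 * (j + 1 : ℕ) * ((j + 1 : ℕ) + 1)) =
        1 / (12 * (j + 1 : ℕ)) - 1 / (12 * (j + 1 + 1 : ℕ)) := by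
      push_cast; field_simp; ring
    simp only [hf]
    linarith
  have hlim : Tendsto f atTop (𝓝 (log √π - 0)) := by
    refine ((continuousAt_log (by positivity)).tendsto.comp
      (tendsto_stirlingSeq_sqrt_pi.comp (tendsto_add_atTop_nat 1))).sub ?_
    simpa [mul_comm] using
      (tendsto_one_div_add_atTop_nhds_zero_nat (𝕜 := ℝ)).const_mul (12⁻¹ : ℝ)
  obtain ⟨j, rfl⟩ := Nat.exists_eq_add_one_of_ne_zero hk
  have hj := hmono.ge_of_tendsto hlim j
  simp only [hf] at hj
  rw [← log_le_log_iff (stirlingSeq'_pos j) (by positivity),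
    log_mul (by positivity) (by positivity), log_exp]
  linarith

/-- `√(2π) ω_N P(B_N = 0)` for `N = n + m`, see `sqrt_two_pi_mul_choose_mul_pow_mul_pow`. -/
noncomputable def stirlingRatio (n m : ℕ) : ℝ :=
  √π * stirlingSeq (n + m) / (stirlingSeq n * stirlingSeq m)

theorem stirlingRatio_pos {n m : ℕ} (hn : n ≠ 0) (hm : m ≠ 0) : 0 < stirlingRatio n m := by
  have := stirlingSeq_pos hn
  have := stirlingSeq_pos hm
  have := stirlingSeq_pos (n := n + m) (by omega)
  unfold stirlingRatio
  positivity

theorem stirlingRatio_le_one {n m : ℕ} (hn : n ≠ 0) (hm : m ≠ 0) : stirlingRatio n m ≤ 1 := by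
  obtain ⟨n, rfl⟩ := Nat.exists_eq_add_one_of_ne_zero hn
  have hanti : stirlingSeq (n + 1 + m) ≤ stirlingSeq (n + 1) := by
    simpa [Nat.add_right_comm] using stirlingSeq'_antitone (Nat.le_add_right n m)
  rw [stirlingRatio, div_le_one (mul_pos (stirlingSeq_pos hn) (stirlingSeq_pos hm))]
  calc √π * stirlingSeq (n + 1 + m) ≤ √π * stirlingSeq (n + 1) := by gcongr
    _ ≤ stirlingSeq (n + 1) * stirlingSeq m := by
      rw [mul_comm]
      exact mul_le_mul_of_nonneg_left (sqrt_pi_le_stirlingSeq hm) (stirlingSeq_pos hn).le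

theorem exp_div_twelve_le_one_add {x : ℝ} (hx0 : 0 ≤ x) (hx : x ≤ 11) :
    exp (x / 12) ≤ 1 + x := by
  have h := add_one_le_exp (-(x / 12))
  rw [exp_neg, le_inv_comm₀ (by linarith) (exp_pos _)] at h
  refine h.trans ?_
  rw [inv_le_iff_one_le_mul₀ (by linarith)]
  nlinarith

theorem one_le_stirlingRatio_mul {n m : ℕ} (hn : n ≠ 0) (hm : m ≠ 0) :
    1 ≤ stirlingRatio n m * (1 + (1 / n + 1 / m)) := by
  set x : ℝ := 1 / n + 1 / m
  have hx0 : 0 ≤ x := by positivity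
  have hx : x ≤ 11 := by
    have : 1 / (n : ℝ) ≤ 1 :=
      div_le_one_of_le₀ (by exact_mod_cast Nat.one_le_iff_ne_zero.2 hn) n.cast_nonneg
    have : 1 / (m : ℝ) ≤ 1 :=
      div_le_one_of_le₀ (by exact_mod_cast Nat.one_le_iff_ne_zero.2 hm) m.cast_nonneg
    linarith
  have hprod : stirlingSeq n * stirlingSeq m ≤ √π * √π * (1 + x) := calc
    stirlingSeq n * stirlingSeq m ≤ (√π * exp (1 / (12 * n))) * (√π * exp (1 / (12 * m))) :=
      mul_le_mul (stirlingSeq_le_sqrt_pi_mul_exp hn) (stirlingSeq_le_sqrt_pi_mul_exp hm)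
        (stirlingSeq_pos hm).le (by positivity)
    _ = √π * √π * exp (x / 12) := by
      rw [mul_mul_mul_comm, ← exp_add]
      congr 2
      simp only [x]
      field_simp
    _ ≤ √π * √π * (1 + x) := by gcongr; exact exp_div_twelve_le_one_add hx0 hx
  rw [stirlingRatio, div_mul_eq_mul_div,
    le_div_iff₀ (mul_pos (stirlingSeq_pos hn) (stirlingSeq_pos hm)), one_mul]
  calc stirlingSeq n * stirlingSeq m ≤ √π * √π * (1 + x) := hprod
    _ ≤ √π * stirlingSeq (n + m) * (1 + x) := by
      gcongr
      exact sqrt_pi_le_stirlingSeq (by omega)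

theorem sqrt_two_pi_mul_choose_mul_pow_mul_pow {n m : ℕ} (hn : n ≠ 0) (hm : m ≠ 0) :
    √(2 * π * (n * m / (n + m))) *
        ((n + m).choose n * (n / (n + m)) ^ n * (m / (n + m)) ^ m : ℝ) =
      stirlingRatio n m := by
  have hn0 : (0 : ℝ) < n := by positivity
  have hm0 : (0 : ℝ) < m := by positivity
  have hs : √(2 * π * (n * m / (n + m))) = √π * √(2 * n) * √(2 * m) / √(2 * (n + m)) := by
    rw [eq_div_iff (by positivity), ← sqrt_mul (by positivity), ← sqrt_mul (by positivity),
      ← sqrt_mul (by positivity)]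
    congr 1
    field_simp
  rw [hs, stirlingRatio, Nat.cast_choose ℝ (Nat.le_add_right n m), Nat.add_sub_cancel_left]
  simp only [stirlingSeq, div_pow, Nat.cast_add]
  rw [pow_add (rexp 1), pow_add ((n : ℝ) + m)]
  field_simp

end StirlingBounds

section Fourier

open Complex

theorem integral_cexp_I_mul_intCast_div (ω : ℝ) (hω : ω ≠ 0) (k : ℤ) :
    ∫ t in -(π * ω)..π * ω, cexp (I * t * k / ω) =
      if k = 0 then ((2 * π * ω : ℝ) : ℂ) else 0 := by
  split_ifs with hk
  · simp [hk]
    ring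
  have hω' : (ω : ℂ) ≠ 0 := ofReal_ne_zero.2 hω
  have hc : I * k / ω ≠ 0 := by simp [hk, hω, I_ne_zero]
  simp_rw [show ∀ t : ℝ, I * t * k / ω = I * k / ω * t from fun t => by ring]
  rw [integral_exp_mul_complex hc, div_eq_zero_iff, sub_eq_zero]
  left
  have hper : I * k / ω * ((π * ω : ℝ) : ℂ) =
      I * k / ω * ((-(π * ω) : ℝ) : ℂ) + k * (2 * π * I) := by
    push_cast
    field_simp
    ring
  rw [hper, Complex.exp_add, exp_int_mul_two_pi_mul_I, mul_one]

theorem integral_sum_mul_cexp {α : Type*} [Fintype α] (c : α → ℂ) (B : α → ℝ)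
    (hB : ∀ x, ∃ k : ℤ, B x = k) (ω : ℝ) (hω : ω ≠ 0) :
    ∫ t in -(π * ω)..π * ω, ∑ x, c x * cexp (I * t * (B x : ℂ) / ω) =
      ((2 * π * ω : ℝ) : ℂ) * ∑ x, if B x = 0 then c x else 0 := by
  rw [intervalIntegral.integral_finsetSum
    fun x _ => (by fun_prop : Continuous _).intervalIntegrable _ _, Finset.mul_sum]
  refine Finset.sum_congr rfl fun x _ => ?_
  obtain ⟨k, hk⟩ := hB x
  rw [intervalIntegral.integral_const_mul, hk, ofReal_intCast,
    integral_cexp_I_mul_intCast_div ω hω k]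
  simp only [Int.cast_eq_zero]
  split_ifs <;> ring

end Fourier

theorem wt_eq_pow_mul_pow (N : ℕ) (p : ℝ) (ε : Fin N → Bool) :
    wt N p ε = p ^ #{j | ε j} * (1 - p) ^ (N - #{j | ε j}) := by
  rw [wt, prod_ite, prod_const, prod_const, filter_not, card_sdiff_of_subset (filter_subset _ _),
    card_univ, Fintype.card_fin]

theorem BN_eq_card_sub (N : ℕ) (p : ℝ) (ε : Fin N → Bool) : BN N p ε = #{j | ε j} - N * p := by
  simp [BN, sum_sub_distrib, sum_boole]

theorem BN_exists_intCast {N n : ℕ} {p : ℝ} (hNp : N * p = n) (ε : Fin N → Bool) :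
    ∃ k : ℤ, BN N p ε = k :=
  ⟨#{j | ε j} - n, by rw [BN_eq_card_sub, hNp]; push_cast; ring⟩

theorem card_filter_card_eq_choose (N n : ℕ) :
    #{ε : Fin N → Bool | #{j | ε j} = n} = N.choose n := by
  have h : #(powersetCard n (univ : Finset (Fin N))) = N.choose n := by simp
  rw [← h]
  refine card_nbij' (fun ε => ({j | ε j} : Finset (Fin N))) (fun s j => decide (j ∈ s))
    ?_ ?_ ?_ ?_ <;> intro x hx <;> simp_all [mem_powersetCard]

theorem bprob_BN_eq_zero {N n : ℕ} {p : ℝ} (hNp : N * p = n) :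
    bprob N p (fun ε => BN N p ε = 0) = N.choose n * p ^ n * (1 - p) ^ (N - n) := by
  have hBN : ∀ ε : Fin N → Bool, BN N p ε = 0 ↔ #{j | ε j} = n := fun ε => by
    rw [BN_eq_card_sub, hNp, sub_eq_zero, Nat.cast_inj]
  simp_rw [bprob, hBN]
  rw [← sum_filter, sum_congr rfl fun ε hε => by rw [wt_eq_pow_mul_pow, (mem_filter.1 hε).2],
    sum_const, card_filter_card_eq_choose, nsmul_eq_mul, mul_assoc]

open Complex in
theorem condExpB_eq_inv_mul_integral {N n : ℕ} {p ω : ℝ} (hNp : N * p = n) (hω : ω ≠ 0)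
    (Z : (Fin N → Bool) → ℝ) :
    (condExpB N p Z : ℂ) = ((2 * π * ω * bprob N p (fun ε => BN N p ε = 0) : ℝ) : ℂ)⁻¹ *
      ∫ t in -(π * ω)..π * ω,
        ∑ ε, (wt N p ε : ℂ) * (Z ε : ℂ) * cexp (I * t * (BN N p ε : ℂ) / ω) := by
  have h2πω : ((2 * π * ω : ℝ) : ℂ) ≠ 0 := ofReal_ne_zero.2 (by positivity)
  rw [integral_sum_mul_cexp _ _ (BN_exists_intCast hNp) ω hω, condExpB, bexp, ofReal_mul,
    mul_inv_rev, mul_assoc, inv_mul_cancel_left₀ h2πω, ofReal_div, div_eq_inv_mul]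
  simp only [mul_ite, mul_zero]
  push_cast [apply_ite ((↑) : ℝ → ℂ)]
  rfl

/-- Lemma 5.1: a Fourier inversion formula for conditional expectations given
B_N = 0, and bounds on B_n(p) = 2π ω_N P(B_N = 0). -/
theorem lemma51 :
    ∀ (N n : ℕ), 2 ≤ N → 1 ≤ n → n < N →
      ∀ p q ω : ℝ, p = (n : ℝ) / N → q = 1 - p →
        0 ≤ ω → ω ^ 2 = (N : ℝ) * p * q →
        ∀ Bn : ℝ, Bn = 2 * Real.pi * ω * bprob N p (fun ε => BN N p ε = 0) →
          (∀ Z : (Fin N → Bool) → ℝ,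
            (condExpB N p Z : ℂ) =
              (Bn : ℂ)⁻¹ *
                ∫ t in (-(Real.pi * ω))..(Real.pi * ω),
                  ∑ ε : Fin N → Bool,
                    (wt N p ε : ℂ) * (Z ε : ℂ) *
                      Complex.exp (Complex.I * (t : ℂ) * (BN N p ε : ℂ) / (ω : ℂ))) ∧
          1 ≤ Real.sqrt (2 * Real.pi) / Bn ∧
          Real.sqrt (2 * Real.pi) / Bn ≤ 1 + (ω ^ 2)⁻¹ := by
  intro N n _ hn hnN p q ω hp hq hω0 hω2 Bn hBn
  obtain ⟨m, rfl⟩ : ∃ m, N = n + m := ⟨N - n, by omega⟩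
  have hn' : n ≠ 0 := by omega
  have hm' : m ≠ 0 := by omega
  push_cast at hp hω2
  have hNp : ((n + m : ℕ) : ℝ) * p = n := by rw [hp]; push_cast; field_simp
  have hq' : q = m / (n + m) := by rw [hq, hp]; field_simp; ring
  have hω2' : ω ^ 2 = n * m / (n + m) := by rw [hω2, hp, hq']; field_simp
  have hω : ω = √(n * m / (n + m)) := by rw [← hω2', sqrt_sq hω0]
  have hBn' : Bn = √(2 * π) * stirlingRatio n m := by
    rw [← sqrt_two_pi_mul_choose_mul_pow_mul_pow hn' hm', hBn, bprob_BN_eq_zero hNp, ← hq,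
      Nat.add_sub_cancel_left, hp, hq', ← hω2', sqrt_mul' _ (sq_nonneg ω), sqrt_sq hω0]
    linear_combination (-ω * ((n + m).choose n * (n / (n + m)) ^ n * (m / (n + m)) ^ m : ℝ)) *
      mul_self_sqrt (by positivity : (0 : ℝ) ≤ 2 * π)
  have hratio : √(2 * π) / Bn = (stirlingRatio n m)⁻¹ := by
    rw [hBn', div_mul_cancel_left₀ (by positivity)]
  have hinv : (ω ^ 2)⁻¹ = 1 / n + 1 / m := by rw [hω2']; field_simp; ring
  refine ⟨fun Z => hBn ▸ condExpB_eq_inv_mul_integral hNp (by rw [hω]; positivity) Z, ?_, ?_⟩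
  · rw [hratio, one_le_inv₀ (stirlingRatio_pos hn' hm')]
    exact stirlingRatio_le_one hn' hm'
  · rw [hratio, inv_le_iff_one_le_mul₀' (stirlingRatio_pos hn' hm'), hinv]
    exact one_le_stirlingRatio_mul hn' hm'
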